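/- arXiv:2209.08804 — 2 statements merged into one kernel-verified Lean document; each statement's English description precedes it below -/
import Mathlib

section
/- For every integer n ≥ 3, the wheel graph W_n has Frank number 2. -/
namespace Frank

variable {V : Type*}

/-- An orientation of a simple graph `G`: each edge gets exactly one direction. -/
structure Orient (G : SimpleGraph V) where
  dir : V → V → Prop
  dir_iff : ∀ u v, (dir u v ∨ dir v u) ↔ G.Adj u v
  not_both : ∀ u v, dir u v → ¬ dir v u

/-- A relation (digraph) is strongly connected. -/
def IsStrong (r : V → V → Prop) : Prop :=
  ∀ x y : V, Relation.ReflTransGen r x y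

/-- Delete the single arc `(u,v)` from the digraph `r`. -/
def delArc (r : V → V → Prop) (u v : V) : V → V → Prop :=
  fun a b => r a b ∧ ¬(a = u ∧ b = v)

/-- Delete (both possible arcs of) the edge `uv` from the digraph `r`. -/
def delEdge (r : V → V → Prop) (u v : V) : V → V → Prop :=
  fun a b => r a b ∧ ¬((a = u ∧ b = v) ∨ (a = v ∧ b = u))

/-- The edge `uv` is deletable in the orientation `O`: after removing its arc the
orientation stays strongly connected. -/
def EdgeDeletable {G : SimpleGraph V} (O : Orient G) (u v : V) : Prop :=
  IsStrong (delEdge O.dir u v)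

/-- The Frank number of `G`: the least `k` admitting `k` strongly connected orientations
such that every edge is deletable in at least one of them. -/
noncomputable def frankNumber (G : SimpleGraph V) : ℕ :=
  sInf {k | ∃ Os : Fin k → Orient G, (∀ i, IsStrong (Os i).dir) ∧
    ∀ u v, G.Adj u v → ∃ i, EdgeDeletable (Os i) u v}

/-- `G` is 2-edge-connected: connected and stays connected after deleting any single edge. -/
def TwoEdgeConn (G : SimpleGraph V) : Prop :=
  G.Connected ∧ ∀ e : Sym2 V, (G.deleteEdges {e}).Connected

/-- `G` is 3-edge-connected: connected and stays connected after deleting any two edges. -/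
def ThreeEdgeConn (G : SimpleGraph V) : Prop :=
  G.Connected ∧ ∀ e f : Sym2 V, (G.deleteEdges {e, f}).Connected

/-- The wheel `W n`: a hub (`none`) joined to a cycle on `ZMod n`. -/
def wheel (n : ℕ) : SimpleGraph (Option (ZMod n)) :=
  SimpleGraph.fromRel (fun a b => a = none ∨ ∃ i : ZMod n, a = some i ∧ b = some (i + 1))

/-! If every edge at a vertex `x` is deletable in one strongly connected orientation, then `x`
has two in-neighbours and two out-neighbours; a rim vertex has only three neighbours, so one
orientation never suffices.

Two suffice. In the first, the rim is a directed cycle and the hub sends its arcs to the odd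
vertices: for `n ≥ 4` every spoke is deletable (there are two spokes in each direction), and so is
every rim edge `k → k + 1` with `k` even, through `k → hub → k + 1`. In the second, the rim is the
directed path `0 → ⋯ → n - 1` closed by the arc `0 → n - 1`, and the hub sends its arcs to the even
vertices other than `n - 1`; it makes the remaining rim edges deletable, and for `n = 3` also the
remaining spoke. -/

open Relation Set

section Digraph

variable {r : V → V → Prop} {x y u v : V}

lemma IsStrong.exists_dir_to (h : IsStrong r) (hyx : y ≠ x) : ∃ w, r w x := by
  rcases (h y x).cases_tail with rfl | ⟨w, -, hw⟩
  · exact absurd rfl hyx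
  · exact ⟨w, hw⟩

lemma IsStrong.exists_dir_from (h : IsStrong r) (hxy : x ≠ y) : ∃ w, r x w := by
  rcases (h x y).cases_head with rfl | ⟨w, hw, -⟩
  · exact absurd rfl hxy
  · exact ⟨w, hw⟩

lemma isStrong_of_forall_reflTransGen (c : V) (h₁ : ∀ x, ReflTransGen r c x)
    (h₂ : ∀ x, ReflTransGen r x c) : IsStrong r :=
  fun x y => (h₂ x).trans (h₁ y)

lemma delEdge_comm (r : V → V → Prop) (u v : V) : delEdge r u v = delEdge r v u := by
  funext a b
  simp only [delEdge, or_comm]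

lemma isStrong_delArc_of_reflTransGen (hr : IsStrong r) (h : ReflTransGen (delArc r u v) u v) :
    IsStrong (delArc r u v) := by
  intro a b
  refine reflTransGen_closed (fun c d hcd => ?_) _ _ (hr a b)
  by_cases hc : c = u ∧ d = v
  · obtain ⟨rfl, rfl⟩ := hc
    exact h
  · exact .single ⟨hcd, hc⟩

lemma reflTransGen_of_forall_succ (f : ℕ → V) {a b : ℕ} (hab : a ≤ b)
    (h : ∀ k, a ≤ k → k < b → r (f k) (f (k + 1))) : ReflTransGen r (f a) (f b) :=
  (reflTransGen_of_succ_of_le (fun i j => r (f i) (f j)) (fun i hi => h i hi.1 hi.2) hab).lift f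
    fun _ _ => id

end Digraph

section Orient

variable {G : SimpleGraph V} (O : Orient G) {x y u v w : V}

lemma Orient.irrefl (u : V) : ¬ O.dir u u := fun h => O.not_both u u h h

lemma Orient.adj_of_dir (h : O.dir u v) : G.Adj u v := (O.dir_iff u v).1 (Or.inl h)

lemma Orient.delEdge_eq_delArc (h : O.dir u v) : delEdge O.dir u v = delArc O.dir u v := by
  funext a b
  refine propext ⟨fun ⟨hab, hne⟩ => ⟨hab, fun h' => hne (Or.inl h')⟩, fun ⟨hab, hne⟩ => ⟨hab, ?_⟩⟩
  rintro (h' | ⟨rfl, rfl⟩)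
  · exact hne h'
  · exact O.not_both _ _ h hab

lemma EdgeDeletable.symm {O : Orient G} (h : EdgeDeletable O u v) : EdgeDeletable O v u := by
  rwa [EdgeDeletable, delEdge_comm]

lemma edgeDeletable_of_reflTransGen (hO : IsStrong O.dir) (huv : O.dir u v)
    (h : ReflTransGen (delArc O.dir u v) u v) : EdgeDeletable O u v := by
  rw [EdgeDeletable, O.delEdge_eq_delArc huv]
  exact isStrong_delArc_of_reflTransGen hO h

lemma edgeDeletable_of_dir_of_dir (hO : IsStrong O.dir) (huv : O.dir u v) (huw : O.dir u w)
    (hwv : O.dir w v) : EdgeDeletable O u v :=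
  edgeDeletable_of_reflTransGen O hO huv <|
    .head ⟨huw, fun h => O.irrefl _ (h.2 ▸ hwv)⟩ (.single ⟨hwv, fun h => O.irrefl _ (h.1 ▸ huw)⟩)

lemma exists_ne_dir_to_of_edgeDeletable (hyx : y ≠ x) (h : EdgeDeletable O u x) :
    ∃ w ≠ u, O.dir w x := by
  obtain ⟨w, hw, hne⟩ := IsStrong.exists_dir_to h hyx
  exact ⟨w, fun hwu => hne (Or.inl ⟨hwu, rfl⟩), hw⟩

lemma exists_ne_dir_from_of_edgeDeletable (hxy : x ≠ y) (h : EdgeDeletable O x u) :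
    ∃ w ≠ u, O.dir x w := by
  obtain ⟨w, hw, hne⟩ := IsStrong.exists_dir_from h hxy
  exact ⟨w, fun hwu => hne (Or.inl ⟨rfl, hwu⟩), hw⟩

theorem four_le_encard_neighborSet (hO : IsStrong O.dir) (hxy : x ≠ y)
    (hdel : ∀ v, G.Adj x v → EdgeDeletable O x v) : 4 ≤ (G.neighborSet x).encard := by
  have hin : 1 < {w | O.dir w x}.encard := by
    obtain ⟨w, hw⟩ := hO.exists_dir_to hxy.symm
    obtain ⟨w', hne, hw'⟩ :=
      exists_ne_dir_to_of_edgeDeletable O hxy.symm (hdel w (O.adj_of_dir hw).symm).symm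
    exact one_lt_encard_iff.2 ⟨w', w, hw', hw, hne⟩
  have hout : 1 < {w | O.dir x w}.encard := by
    obtain ⟨w, hw⟩ := hO.exists_dir_from hxy
    obtain ⟨w', hne, hw'⟩ := exists_ne_dir_from_of_edgeDeletable O hxy (hdel w (O.adj_of_dir hw))
    exact one_lt_encard_iff.2 ⟨w', w, hw', hw, hne⟩
  have hdisj : Disjoint {w | O.dir w x} {w | O.dir x w} :=
    disjoint_left.2 fun w h h' => O.not_both _ _ h h'
  have hsub : {w | O.dir w x} ∪ {w | O.dir x w} ⊆ G.neighborSet x := by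
    rintro w (h | h)
    exacts [(O.adj_of_dir h).symm, O.adj_of_dir h]
  calc (4 : ℕ∞) = 2 + 2 := by norm_num
    _ ≤ {w | O.dir w x}.encard + {w | O.dir x w}.encard :=
      add_le_add (Order.add_one_le_of_lt hin) (Order.add_one_le_of_lt hout)
    _ = _ := (encard_union_eq hdisj).symm
    _ ≤ _ := encard_le_encard hsub

end Orient

section FrankNumber

variable {G : SimpleGraph V} {x y : V}

def IsFrankFamily {k : ℕ} (Os : Fin k → Orient G) : Prop :=
  (∀ i, IsStrong (Os i).dir) ∧ ∀ u v, G.Adj u v → ∃ i, EdgeDeletable (Os i) u v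

lemma IsFrankFamily.two_le {k : ℕ} {Os : Fin k → Orient G} (h : IsFrankFamily Os)
    (hxy : G.Adj x y) (hx : (G.neighborSet x).encard < 4) : 2 ≤ k := by
  obtain ⟨hstrong, hcov⟩ := h
  obtain ⟨i, -⟩ := hcov x y hxy
  by_contra hk
  have hi : ∀ j, j = i := fun j => Fin.ext (by omega)
  refine hx.not_ge (four_le_encard_neighborSet (Os i) (hstrong i) hxy.ne fun v hv => ?_)
  obtain ⟨j, hj⟩ := hcov x v hv
  rwa [hi j] at hj

lemma isFrankFamily_pair {O₁ O₂ : Orient G} (h₁ : IsStrong O₁.dir) (h₂ : IsStrong O₂.dir)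
    (h : ∀ u v, G.Adj u v → EdgeDeletable O₁ u v ∨ EdgeDeletable O₂ u v) :
    IsFrankFamily ![O₁, O₂] :=
  ⟨Fin.forall_fin_two.2 ⟨h₁, h₂⟩, fun u v huv => (h u v huv).elim (⟨0, ·⟩) (⟨1, ·⟩)⟩

theorem frankNumber_eq_two (hxy : G.Adj x y) (hx : (G.neighborSet x).encard < 4)
    {Os : Fin 2 → Orient G} (hOs : IsFrankFamily Os) : frankNumber G = 2 :=
  le_antisymm (Nat.sInf_le ⟨Os, hOs⟩)
    (le_csInf ⟨2, Os, hOs⟩ fun _ ⟨_, h⟩ => IsFrankFamily.two_le h hxy hx)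

end FrankNumber

section Wheel

variable {n : ℕ}

lemma natCast_eq_natCast_iff_of_lt {a b : ℕ} (ha : a < n) (hb : b < n) :
    (a : ZMod n) = b ↔ a = b := by
  rw [ZMod.natCast_eq_natCast_iff', Nat.mod_eq_of_lt ha, Nat.mod_eq_of_lt hb]

lemma natCast_pred_add_one [NeZero n] : ((n - 1 : ℕ) : ZMod n) + 1 = ((0 : ℕ) : ZMod n) := by
  rw [← Nat.cast_add_one, Nat.sub_add_cancel NeZero.one_le, ZMod.natCast_self, Nat.cast_zero]

lemma some_natCast_inj {a b : ℕ} (ha : a < n) (hb : b < n) :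
    some (a : ZMod n) = some (b : ZMod n) ↔ a = b := by
  rw [Option.some_inj, natCast_eq_natCast_iff_of_lt ha hb]

lemma reflTransGen_of_forall_dir_succ [NeZero n] {r : Option (ZMod n) → Option (ZMod n) → Prop}
    (h : ∀ i : ZMod n, r (some i) (some (i + 1))) (i j : ZMod n) :
    ReflTransGen r (some i) (some j) := by
  have := Nat.rel_of_forall_rel_succ_of_le (ReflTransGen r) (f := fun k : ℕ => some (i + k))
    (fun k => .single (by simpa [add_assoc] using h (i + k))) (Nat.zero_le (j - i).val)
  simpa using this

lemma wheel_adj_none_some (i : ZMod n) : (wheel n).Adj none (some i) := by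
  simp [wheel]

lemma wheel_adj_some_some [Nontrivial (ZMod n)] {i j : ZMod n} :
    (wheel n).Adj (some i) (some j) ↔ j = i + 1 ∨ i = j + 1 := by
  suffices h : j = i + 1 ∨ i = j + 1 → i ≠ j by simpa [wheel] using h
  rintro (rfl | rfl) <;> simp

lemma wheel_forall_adj {P : Option (ZMod n) → Option (ZMod n) → Prop}
    (hP : ∀ u v, P u v → P v u) (hspoke : ∀ i, P none (some i))
    (hrim : ∀ i, P (some i) (some (i + 1))) :
    ∀ u v, (wheel n).Adj u v → P u v := by
  suffices h : ∀ u v, (u = none ∨ ∃ i, u = some i ∧ v = some (i + 1)) → u ≠ v → P u v by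
    intro u v huv
    rcases (SimpleGraph.fromRel_adj _ u v).1 huv with ⟨hne, huv | hvu⟩
    exacts [h u v huv hne, hP _ _ (h v u hvu hne.symm)]
  rintro u v (rfl | ⟨i, rfl, rfl⟩) hne
  · cases v with
    | none => exact absurd rfl hne
    | some j => exact hspoke j
  · exact hrim i

lemma encard_neighborSet_wheel_le (i : ZMod n) :
    ((wheel n).neighborSet (some i)).encard ≤ 3 := by
  have hsub : (wheel n).neighborSet (some i) ⊆ {none, some (i + 1), some (i - 1)} := by
    rintro (_ | j) hj
    · exact Or.inl rfl
    · obtain ⟨-, rfl | rfl⟩ : i ≠ j ∧ (j = i + 1 ∨ i = j + 1) := by simpa [wheel] using hj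
      · simp
      · simp
  refine (encard_le_encard hsub).trans <| (encard_insert_le _ _).trans ?_
  grw [encard_insert_le, encard_singleton]
  norm_num

end Wheel

section WheelOrient

variable {n : ℕ}

/-- Spoke `k` points away from the hub iff `fromHub k`, and the rim edge `{k, k + 1}` points
forward iff `fwd k` (vertices are read through `ZMod.val`). -/
def wheelDir (fromHub fwd : ℕ → Prop) : Option (ZMod n) → Option (ZMod n) → Prop
  | none, none => False
  | none, some j => fromHub j.val
  | some i, none => ¬ fromHub i.val
  | some i, some j => (j = i + 1 ∧ fwd i.val) ∨ (i = j + 1 ∧ ¬ fwd j.val)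

def wheelOrient (hn : 3 ≤ n) (fromHub fwd : ℕ → Prop) : Orient (wheel n) where
  dir := wheelDir fromHub fwd
  dir_iff := by
    have : Fact (1 < n) := ⟨by omega⟩
    rintro (_ | i) (_ | j)
    · simp [wheelDir]
    · exact iff_of_true (em _) (wheel_adj_none_some j)
    · exact iff_of_true (em' _) (wheel_adj_none_some i).symm
    · rw [wheel_adj_some_some]
      simp only [wheelDir]
      tauto
  not_both := by
    have h2 : (2 : ZMod n) ≠ 0 := by
      simpa using (natCast_eq_natCast_iff_of_lt (n := n) (a := 2) (b := 0)
        (by omega) (by omega)).not.2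
    rintro (_ | i) (_ | j) h h'
    · exact h
    · exact h' h
    · exact h h'
    · simp only [wheelDir] at h h'
      rcases h with ⟨rfl, hf⟩ | ⟨rfl, hf⟩ <;> rcases h' with ⟨hj, hf'⟩ | ⟨hj, hf'⟩
      all_goals first
        | exact hf' hf | exact hf hf'
        | exact h2 (by linear_combination -hj)

variable (hn : 3 ≤ n) (fromHub fwd : ℕ → Prop) {k : ℕ}

lemma wheelOrient_dir_hub (hk : k < n) :
    (wheelOrient hn fromHub fwd).dir none (some k) ↔ fromHub k := by
  show fromHub _ ↔ _
  rw [ZMod.val_cast_of_lt hk]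

lemma wheelOrient_dir_to_hub (hk : k < n) :
    (wheelOrient hn fromHub fwd).dir (some k) none ↔ ¬ fromHub k := by
  show ¬ fromHub _ ↔ _
  rw [ZMod.val_cast_of_lt hk]

lemma wheelOrient_dir_succ (hk : k < n) (h : fwd k) :
    (wheelOrient hn fromHub fwd).dir (some k) (some ((k + 1 : ℕ) : ZMod n)) := by
  rw [Nat.cast_add_one]
  exact Or.inl ⟨rfl, by rwa [ZMod.val_cast_of_lt hk]⟩

lemma wheelOrient_dir_pred (hk : k < n) (h : ¬ fwd k) :
    (wheelOrient hn fromHub fwd).dir (some ((k : ZMod n) + 1)) (some k) :=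
  Or.inr ⟨rfl, by rwa [ZMod.val_cast_of_lt hk]⟩

lemma isStrong_wheelOrient_of_hub
    (h₁ : ∀ k < n, ReflTransGen (wheelOrient hn fromHub fwd).dir none (some k))
    (h₂ : ∀ k < n, ReflTransGen (wheelOrient hn fromHub fwd).dir (some k) none) :
    IsStrong (wheelOrient hn fromHub fwd).dir := by
  have : NeZero n := ⟨by omega⟩
  refine isStrong_of_forall_reflTransGen none ?_ ?_ <;> rintro (_ | i)
  all_goals first | exact .refl | rw [← ZMod.natCast_zmod_val i]
  exacts [h₁ _ i.val_lt, h₂ _ i.val_lt]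

end WheelOrient

section Rotation

variable {n : ℕ} (hn : 3 ≤ n) (A : ℕ → Prop) {k k' : ℕ}

def rotationOrient : Orient (wheel n) :=
  wheelOrient hn A fun _ => True

lemma rotationOrient_dir_succ (i : ZMod n) :
    (rotationOrient hn A).dir (some i) (some (i + 1)) :=
  Or.inl ⟨rfl, trivial⟩

lemma isStrong_rotationOrient {a b : ℕ} (ha : a < n) (hb : b < n) (hA : A a) (hB : ¬ A b) :
    IsStrong (rotationOrient hn A).dir := by
  have : NeZero n := ⟨by omega⟩
  refine isStrong_wheelOrient_of_hub hn _ _ (fun k _ => ?_) fun k _ => ?_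
  · exact .head ((wheelOrient_dir_hub hn _ _ ha).2 hA)
      (reflTransGen_of_forall_dir_succ (rotationOrient_dir_succ hn A) _ _)
  · exact (reflTransGen_of_forall_dir_succ (rotationOrient_dir_succ hn A) _ _).tail
      ((wheelOrient_dir_to_hub hn _ _ hb).2 hB)

lemma rotationOrient_edgeDeletable_hub (hR : IsStrong (rotationOrient hn A).dir)
    (hk : k < n) (hk' : k' < n) (hne : k' ≠ k) (hA : A k) (hA' : A k') :
    EdgeDeletable (rotationOrient hn A) none (some k) := by
  have : NeZero n := ⟨by omega⟩
  refine edgeDeletable_of_reflTransGen _ hR ((wheelOrient_dir_hub hn _ _ hk).2 hA) <|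
    .head ⟨(wheelOrient_dir_hub hn _ _ hk').2 hA', fun h => hne ((some_natCast_inj hk' hk).1 h.2)⟩
      (reflTransGen_of_forall_dir_succ (fun i => ⟨rotationOrient_dir_succ hn A i, fun h => ?_⟩) _ _)
  exact nomatch h.1

lemma rotationOrient_edgeDeletable_to_hub (hR : IsStrong (rotationOrient hn A).dir)
    (hk : k < n) (hk' : k' < n) (hne : k' ≠ k) (hA : ¬ A k) (hA' : ¬ A k') :
    EdgeDeletable (rotationOrient hn A) (some k) none := by
  have : NeZero n := ⟨by omega⟩
  refine edgeDeletable_of_reflTransGen _ hR ((wheelOrient_dir_to_hub hn _ _ hk).2 hA) <|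
    .tail (reflTransGen_of_forall_dir_succ
      (fun i => ⟨rotationOrient_dir_succ hn A i, fun h => ?_⟩) _ _)
      ⟨(wheelOrient_dir_to_hub hn _ _ hk').2 hA', fun h => hne ((some_natCast_inj hk' hk).1 h.1)⟩
  exact nomatch h.2

end Rotation

section TwoOrientations

variable {n : ℕ} (hn : 3 ≤ n) {k : ℕ}

def cycleOrient : Orient (wheel n) :=
  rotationOrient hn fun k => k % 2 = 1

def pathOrient : Orient (wheel n) :=
  wheelOrient hn (fun k => k % 2 = 0 ∧ k + 1 < n) fun k => k + 1 < n

lemma isStrong_cycleOrient : IsStrong (cycleOrient hn).dir :=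
  isStrong_rotationOrient hn _ (a := 1) (b := 0) (by omega) (by omega) rfl (by omega)

lemma cycleOrient_edgeDeletable_spoke_of_even (hk : k < n) (he : k % 2 = 0) :
    EdgeDeletable (cycleOrient hn) none (some k) := by
  obtain ⟨k', hk', hne, he'⟩ : ∃ k' < n, k' ≠ k ∧ k' % 2 = 0 := by
    rcases Nat.eq_zero_or_pos k with rfl | hpos
    exacts [⟨2, by omega, by omega, rfl⟩, ⟨0, by omega, by omega, rfl⟩]
  exact (rotationOrient_edgeDeletable_to_hub hn _ (isStrong_cycleOrient hn) hk hk' hne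
    (by omega) (by omega)).symm

lemma cycleOrient_edgeDeletable_spoke_of_odd (h4 : 4 ≤ n) (hk : k < n) (ho : k % 2 = 1) :
    EdgeDeletable (cycleOrient hn) none (some k) := by
  obtain ⟨k', hk', hne, ho'⟩ : ∃ k' < n, k' ≠ k ∧ k' % 2 = 1 := by
    rcases eq_or_ne k 1 with rfl | h1
    exacts [⟨3, by omega, by omega, rfl⟩, ⟨1, by omega, h1.symm, rfl⟩]
  exact rotationOrient_edgeDeletable_hub hn _ (isStrong_cycleOrient hn) hk hk' hne ho ho'

lemma cycleOrient_edgeDeletable_rim (hk : k + 1 < n) (he : k % 2 = 0) :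
    EdgeDeletable (cycleOrient hn) (some k) (some ((k : ZMod n) + 1)) := by
  rw [← Nat.cast_add_one]
  exact edgeDeletable_of_dir_of_dir _ (isStrong_cycleOrient hn)
    (wheelOrient_dir_succ hn _ _ (by omega) trivial)
    ((wheelOrient_dir_to_hub hn _ _ (by omega)).2 (by omega))
    ((wheelOrient_dir_hub hn _ _ hk).2 (by omega))

lemma pathOrient_dir_chord :
    (pathOrient hn).dir (some ((0 : ℕ) : ZMod n)) (some ((n - 1 : ℕ) : ZMod n)) := by
  have : NeZero n := ⟨by omega⟩
  rw [← natCast_pred_add_one]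
  exact wheelOrient_dir_pred hn _ _ (by omega) (by omega)

lemma pathOrient_dir_hub_zero : (pathOrient hn).dir none (some ((0 : ℕ) : ZMod n)) :=
  (wheelOrient_dir_hub hn _ _ (by omega)).2 ⟨rfl, by omega⟩

lemma reflTransGen_pathOrient_hub (hk : k < n) :
    ReflTransGen (pathOrient hn).dir none (some k) :=
  .head (pathOrient_dir_hub_zero hn) <|
    reflTransGen_of_forall_succ (fun j : ℕ => some (j : ZMod n)) (Nat.zero_le k)
      fun _ _ hj => wheelOrient_dir_succ hn _ _ (by omega) (by omega)

lemma isStrong_pathOrient : IsStrong (pathOrient hn).dir := by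
  refine isStrong_wheelOrient_of_hub hn _ _ (fun k hk => reflTransGen_pathOrient_hub hn hk)
    fun k hk => ?_
  by_cases hA : k % 2 = 0 ∧ k + 1 < n
  · exact .head (wheelOrient_dir_succ hn _ _ hk hA.2)
      (.single ((wheelOrient_dir_to_hub hn _ _ hA.2).2 (by omega)))
  · exact .single ((wheelOrient_dir_to_hub hn _ _ hk).2 hA)

lemma pathOrient_edgeDeletable_rim (hk : k + 1 < n) (ho : k % 2 = 1) :
    EdgeDeletable (pathOrient hn) (some k) (some ((k : ZMod n) + 1)) := by
  rw [← Nat.cast_add_one]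
  have hrim : (pathOrient hn).dir (some k) (some ((k + 1 : ℕ) : ZMod n)) :=
    wheelOrient_dir_succ hn _ _ (by omega) hk
  have hkhub : (pathOrient hn).dir (some k) none :=
    (wheelOrient_dir_to_hub hn _ _ (by omega)).2 (by omega)
  rcases (by omega : k + 2 < n ∨ k + 2 = n) with h | h
  · exact edgeDeletable_of_dir_of_dir _ (isStrong_pathOrient hn) hrim hkhub
      ((wheelOrient_dir_hub hn _ _ hk).2 ⟨by omega, h⟩)
  -- Otherwise `k + 1 = n - 1`, reached from the hub through `0` and the chord.
  obtain rfl : n = k + 2 := h.symm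
  refine edgeDeletable_of_reflTransGen _ (isStrong_pathOrient hn) hrim ?_
  refine .head ⟨hkhub, fun h => nomatch h.2⟩ <|
    .head ⟨pathOrient_dir_hub_zero hn, fun h => nomatch h.1⟩ <| .single ⟨pathOrient_dir_chord hn, fun h => ?_⟩
  exact absurd ((some_natCast_inj (by omega) (by omega)).1 h.1) (by omega)

lemma pathOrient_edgeDeletable_chord : EdgeDeletable (pathOrient hn)
    (some ((n - 1 : ℕ) : ZMod n)) (some (((n - 1 : ℕ) : ZMod n) + 1)) := by
  have : NeZero n := ⟨by omega⟩
  rw [natCast_pred_add_one]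
  refine .symm <| edgeDeletable_of_reflTransGen _ (isStrong_pathOrient hn)
    (pathOrient_dir_chord hn) <|
    reflTransGen_of_forall_succ (fun j : ℕ => some (j : ZMod n)) (Nat.zero_le _)
      fun j _ hj => ⟨wheelOrient_dir_succ hn _ _ (by omega) (by omega), fun h => ?_⟩
  have h0 := (some_natCast_inj (by omega) (by omega)).1 h.1
  have h1 := (some_natCast_inj (by omega) (by omega)).1 h.2
  omega

lemma pathOrient_edgeDeletable_spoke (hodd : n % 2 = 1) :
    EdgeDeletable (pathOrient hn) none (some ((n - 2 : ℕ) : ZMod n)) :=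
  .symm <| edgeDeletable_of_dir_of_dir _ (isStrong_pathOrient hn)
    ((wheelOrient_dir_to_hub hn _ _ (by omega)).2 (by omega))
    (wheelOrient_dir_succ hn _ _ (by omega) (by omega))
    ((wheelOrient_dir_to_hub hn _ _ (by omega)).2 (by omega))

theorem cycleOrient_or_pathOrient_edgeDeletable : ∀ u v, (wheel n).Adj u v →
    EdgeDeletable (cycleOrient hn) u v ∨ EdgeDeletable (pathOrient hn) u v := by
  have : NeZero n := ⟨by omega⟩
  refine wheel_forall_adj (fun u v => Or.imp EdgeDeletable.symm EdgeDeletable.symm)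
    (fun i => ?_) fun i => ?_
  all_goals obtain ⟨k, hk, rfl⟩ : ∃ k < n, (k : ZMod n) = i :=
    ⟨i.val, i.val_lt, ZMod.natCast_zmod_val i⟩
  · rcases Nat.mod_two_eq_zero_or_one k with he | ho
    · exact .inl (cycleOrient_edgeDeletable_spoke_of_even hn hk he)
    rcases (by omega : 4 ≤ n ∨ (n = 3 ∧ k = n - 2)) with h4 | ⟨h3, rfl⟩
    · exact .inl (cycleOrient_edgeDeletable_spoke_of_odd hn h4 hk ho)
    · exact .inr (pathOrient_edgeDeletable_spoke hn (by omega))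
  · rcases (by omega : (k + 1 < n ∧ k % 2 = 0) ∨ (k + 1 < n ∧ k % 2 = 1) ∨ k = n - 1)
      with ⟨hk1, he⟩ | ⟨hk1, ho⟩ | rfl
    · exact .inl (cycleOrient_edgeDeletable_rim hn hk1 he)
    · exact .inr (pathOrient_edgeDeletable_rim hn hk1 ho)
    · exact .inr (pathOrient_edgeDeletable_chord hn)

end TwoOrientations

theorem stmt_6 (n : ℕ) (hn : 3 ≤ n) : frankNumber (wheel n) = 2 :=
  frankNumber_eq_two (wheel_adj_none_some (0 : ZMod n)).symm
    ((encard_neighborSet_wheel_le 0).trans_lt (by norm_num))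
    (isFrankFamily_pair (isStrong_cycleOrient hn) (isStrong_pathOrient hn)
      (cycleOrient_or_pathOrient_edgeDeletable hn))

end Frank
end

section
/- Let G be a 3-edge-connected graph and let v be a vertex of G of degree d ≤ 5 that is not a cut vertex. Then for every choice of perfect matching M between the neighbours of v and the new cycle vertices, the local cubic modification G_v(M) is 3-edge-connected. -/
namespace Frank

variable {V : Type*}

/-- The underlying relation of the local cubic modification of `G` at `v`:
`v` is replaced by a cycle on `ZMod d`, and `m` matches the cycle vertices to
the former neighbours of `v`. -/
def lcmRel (G : SimpleGraph V) (v : V) (d : ℕ) (m : ZMod d → V) :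
    ({w : V // w ≠ v} ⊕ ZMod d) → ({w : V // w ≠ v} ⊕ ZMod d) → Prop
  | Sum.inl w, Sum.inl w' => G.Adj w.1 w'.1
  | Sum.inl w, Sum.inr i => w.1 = m i
  | Sum.inr i, Sum.inr j => j = i + 1
  | Sum.inr _, Sum.inl _ => False

/-- The local cubic modification `G_v(M)` of `G` at `v` given the matching `m`. -/
def localCubicMod (G : SimpleGraph V) (v : V) (d : ℕ) (m : ZMod d → V) :
    SimpleGraph ({w : V // w ≠ v} ⊕ ZMod d) :=
  SimpleGraph.fromRel (lcmRel G v d m)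

/-!
Delete two edges `e`, `f` of `G_v(M)`. If both lie on the cycle `C_v`, every vertex of `C_v`
still reaches its matched neighbour, and these all lie in the connected graph `G - v`.
Otherwise at most one cycle edge is gone, so `C_v` stays connected; contracting it back to `v`
maps `e`, `f` to at most two edges of `G`, and every edge of `G` avoiding these images lifts to
a surviving edge of `G_v(M)`, so connectivity of `G` minus two edges transfers.
-/

end Frank

namespace SimpleGraph

theorem Connected.of_lift_adj {α β : Type*} {G : SimpleGraph α} {H : SimpleGraph β}
    [Nonempty β] (hG : G.Connected) (φ : β → α)
    (hfib : ∀ x y, φ x = φ y → H.Reachable x y)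
    (hlift : ∀ a b, G.Adj a b → ∃ x y, φ x = a ∧ φ y = b ∧ H.Adj x y) : H.Connected := by
  refine ⟨fun x y => ?_⟩
  obtain ⟨p⟩ := hG.preconnected (φ x) (φ y)
  suffices ∀ {a b} (p : G.Walk a b) x y, φ x = a → φ y = b → H.Reachable x y from
    this p x y rfl rfl
  intro a b p
  induction p with
  | nil => exact fun x y hx hy => hfib x y (hx.trans hy.symm)
  | cons hab _ ih =>
    intro x y hx hy
    obtain ⟨x', y', hx', hy', hxy'⟩ := hlift _ _ hab
    exact (hfib x x' (hx.trans hx'.symm)).trans (hxy'.reachable.trans (ih y' y hy' hy))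

theorem reachable_of_adj_add_one {β : Type*} {K : SimpleGraph β} {d : ℕ} [NeZero d]
    (f : ZMod d → β) (k : ZMod d) (h : ∀ i, i ≠ k → K.Adj (f i) (f (i + 1))) (i j : ZMod d) :
    K.Reachable (f i) (f j) := by
  have from_succ : ∀ t : ℕ, t < d → K.Reachable (f (k + 1)) (f (k + 1 + t)) := by
    intro t
    induction t with
    | zero => intro; simp
    | succ t ih =>
      intro ht
      have hne : k + 1 + t ≠ k := by
        intro hk
        have : ((t + 1 : ℕ) : ZMod d) = 0 := by push_cast; linear_combination hk
        rw [ZMod.natCast_eq_zero_iff] at this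
        exact absurd (Nat.le_of_dvd t.succ_pos this) (by omega)
      have := h _ hne
      rw [add_assoc (k + 1), ← Nat.cast_add_one] at this
      exact (ih (by omega)).trans this.reachable
  have hcover : ∀ i, K.Reachable (f (k + 1)) (f i) := fun i => by
    simpa using from_succ (i - (k + 1)).val (ZMod.val_lt _)
  exact (hcover i).symm.trans (hcover j)

end SimpleGraph

namespace Frank

variable {V : Type*}

section LocalCubicMod

open SimpleGraph

variable {G : SimpleGraph V} {v : V} {d : ℕ} {m : ZMod d → V}

def cycleEdge {α : Type*} (i : ZMod d) : Sym2 (α ⊕ ZMod d) :=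
  s(Sum.inr i, Sum.inr (i + 1))

theorem cycleEdge_injective {α : Type*} (hd : 3 ≤ d) :
    Function.Injective (cycleEdge (α := α) (d := d)) := by
  intro i j h
  rcases Sym2.eq_iff.mp h with ⟨h, -⟩ | ⟨h₁, h₂⟩
  · exact Sum.inr_injective h
  · have h₁ := Sum.inr_injective h₁
    have h₂ := Sum.inr_injective h₂
    have : ((2 : ℕ) : ZMod d) = 0 := by push_cast; linear_combination h₂ - h₁
    rw [ZMod.natCast_eq_zero_iff] at this
    exact absurd (Nat.le_of_dvd two_pos this) (by omega)

theorem localCubicMod_adj_inl_inl {a b : {w : V // w ≠ v}} (h : G.Adj a b) :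
    (localCubicMod G v d m).Adj (.inl a) (.inl b) := by
  simp [localCubicMod, lcmRel, h, Subtype.ext_iff, h.ne]

theorem localCubicMod_adj_inl_inr {a : {w : V // w ≠ v}} {i : ZMod d} (h : a.1 = m i) :
    (localCubicMod G v d m).Adj (.inl a) (.inr i) := by
  simp [localCubicMod, lcmRel, h]

theorem localCubicMod_adj_inr_add_one [Nontrivial (ZMod d)] (i : ZMod d) :
    (localCubicMod G v d m).Adj (.inr i) (.inr (i + 1)) := by
  simp [localCubicMod, lcmRel]

def contract (v : V) : {w : V // w ≠ v} ⊕ ZMod d → V :=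
  Sum.elim Subtype.val fun _ => v

theorem exists_localCubicMod_adj_of_adj (hr : G.neighborSet v ⊆ Set.range m) {a b : V}
    (hab : G.Adj a b) :
    ∃ x y, contract v x = a ∧ contract v y = b ∧ (localCubicMod G v d m).Adj x y := by
  by_cases ha : a = v
  · subst ha
    obtain ⟨i, hi⟩ := hr hab
    exact ⟨.inr i, .inl ⟨b, hab.ne'⟩, rfl, rfl, (localCubicMod_adj_inl_inr hi.symm).symm⟩
  by_cases hb : b = v
  · subst hb
    obtain ⟨i, hi⟩ := hr hab.symm
    exact ⟨.inl ⟨a, ha⟩, .inr i, rfl, rfl, localCubicMod_adj_inl_inr hi.symm⟩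
  exact ⟨.inl ⟨a, ha⟩, .inl ⟨b, hb⟩, rfl, rfl, localCubicMod_adj_inl_inl hab⟩

theorem connected_deleteEdges_cycleEdge_cycleEdge
    (hnotcut : (G.induce {w : V | w ≠ v}).Connected) (hmv : ∀ i, m i ≠ v) (i j : ZMod d) :
    ((localCubicMod G v d m).deleteEdges {cycleEdge i, cycleEdge j}).Connected := by
  set H := (localCubicMod G v d m).deleteEdges {cycleEdge i, cycleEdge j}
  have hkeep : ∀ a y, (localCubicMod G v d m).Adj (.inl a) y → H.Adj (.inl a) y :=
    fun a y h => deleteEdges_adj.2 ⟨h, by simp [cycleEdge]⟩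
  let φ : {w : V // w ≠ v} ⊕ ZMod d → {w : V | w ≠ v} :=
    Sum.elim (fun a => ⟨a.1, a.2⟩) fun i => ⟨m i, hmv i⟩
  have hrep : ∀ x, H.Reachable x (.inl ⟨φ x, (φ x).2⟩) := by
    rintro (a | i)
    · rfl
    · exact (hkeep _ _ (localCubicMod_adj_inl_inr rfl)).symm.reachable
  refine hnotcut.of_lift_adj φ (fun x y hxy => ?_) fun a b hab => ?_
  · exact (hrep x).trans (hxy ▸ hrep y).symm
  · exact ⟨.inl ⟨a, a.2⟩, .inl ⟨b, b.2⟩, rfl, rfl, hkeep _ _ (localCubicMod_adj_inl_inl hab)⟩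

theorem connected_deleteEdges_of_ne_cycleEdge (h3 : ThreeEdgeConn G) (hd : 3 ≤ d)
    (hr : G.neighborSet v ⊆ Set.range m) (e : Sym2 ({w : V // w ≠ v} ⊕ ZMod d))
    {f : Sym2 ({w : V // w ≠ v} ⊕ ZMod d)} (hf : ∀ i, f ≠ cycleEdge i) :
    ((localCubicMod G v d m).deleteEdges {e, f}).Connected := by
  have : NeZero d := ⟨by omega⟩
  have : Fact (1 < d) := ⟨by omega⟩
  set H := (localCubicMod G v d m).deleteEdges {e, f}
  obtain ⟨k, hk⟩ : ∃ k, ∀ i, i ≠ k → cycleEdge i ≠ e := by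
    by_cases he : ∃ k, e = cycleEdge k
    · obtain ⟨k, rfl⟩ := he
      exact ⟨k, fun i hi h => hi (cycleEdge_injective hd h)⟩
    · simp only [not_exists] at he
      exact ⟨0, fun i _ h => he i h.symm⟩
  have hcycle : ∀ i j : ZMod d, H.Reachable (.inr i) (.inr j) :=
    reachable_of_adj_add_one Sum.inr k fun i hi => deleteEdges_adj.2
      ⟨localCubicMod_adj_inr_add_one i, by simpa [cycleEdge] using ⟨hk i hi, (hf i).symm⟩⟩
  refine (h3.2 (e.map (contract v)) (f.map (contract v))).of_lift_adj (contract v)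
    (fun x y hxy => ?_) fun a b hab => ?_
  · rcases x with a | i <;> rcases y with b | j
    · rw [Subtype.ext hxy]
    · exact absurd hxy a.2
    · exact absurd hxy.symm b.2
    · exact hcycle i j
  · obtain ⟨hab, hnot⟩ := deleteEdges_adj.1 hab
    obtain ⟨x, y, rfl, rfl, hxy⟩ := exists_localCubicMod_adj_of_adj hr hab
    refine ⟨x, y, rfl, rfl, deleteEdges_adj.2 ⟨hxy, fun hmem => hnot ?_⟩⟩
    simpa [Set.image_pair] using Set.mem_image_of_mem (Sym2.map (contract v)) hmem

end LocalCubicMod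

theorem stmt_9_general (G : SimpleGraph V) (h3 : ThreeEdgeConn G) (v : V) (d : ℕ)
    (hd3 : 3 ≤ d)
    (hnotcut : (G.induce {w : V | w ≠ v}).Connected)
    (m : ZMod d → V)
    (hr : Set.range m = G.neighborSet v) :
    ThreeEdgeConn (localCubicMod G v d m) := by
  have hmv : ∀ i, m i ≠ v := fun i => (hr.subset ⟨i, rfl⟩ : G.Adj v (m i)).ne'
  have hdel : ∀ e f, ((localCubicMod G v d m).deleteEdges {e, f}).Connected := by
    intro e f
    by_cases he : ∃ i, e = cycleEdge i
    · by_cases hf : ∃ j, f = cycleEdge j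
      · obtain ⟨i, rfl⟩ := he
        obtain ⟨j, rfl⟩ := hf
        exact connected_deleteEdges_cycleEdge_cycleEdge hnotcut hmv i j
      · simp only [not_exists] at hf
        exact connected_deleteEdges_of_ne_cycleEdge h3 hd3 hr.superset e hf
    · simp only [not_exists] at he
      rw [Set.pair_comm]
      exact connected_deleteEdges_of_ne_cycleEdge h3 hd3 hr.superset f he
  exact ⟨(hdel (cycleEdge 0) (cycleEdge 0)).mono (SimpleGraph.deleteEdges_le _), hdel⟩

theorem stmt_9 (G : SimpleGraph V) (h3 : ThreeEdgeConn G) (v : V) (d : ℕ)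
    (hd3 : 3 ≤ d) (hd5 : d ≤ 5)
    (hnotcut : (G.induce {w : V | w ≠ v}).Connected)
    (m : ZMod d → V) (hm : Function.Injective m)
    (hr : Set.range m = G.neighborSet v) :
    ThreeEdgeConn (localCubicMod G v d m) :=
  stmt_9_general G h3 v d hd3 hnotcut m hr

end Frank
end
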